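/- (GHZ/W trichotomy) Let ψ : Fin 2 × Fin 2 × Fin 2 → ℂ be a nonzero three-qubit pure state vector that is entangled across every bipartition, i.e., there exist no vectors α : Fin 2 → ℂ and γ : Fin 2 × Fin 2 → ℂ with ψ(i,j,k) = α(i)γ(j,k) for all i,j,k, none with ψ(i,j,k) = α(j)γ(i,k) for all i,j,k, and none with ψ(i,j,k) = α(k)γ(i,j) for all i,j,k. Then there exist invertible 2×2 complex matrices A, B, C such that (A⊗B⊗C)ψ equals either the GHZ state e₀₀₀ + e₁₁₁ or the W state e₁₀₀ + e₀₁₀ + e₀₀₁. -/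

import Mathlib

open Matrix

noncomputable section

/-- The standard basis vector of ℂ²⊗ℂ²⊗ℂ² supported at `(i, j, k)`. -/
def e3 (i j k : Fin 2) : Fin 2 × Fin 2 × Fin 2 → ℂ :=
  fun p => if p = (i, j, k) then 1 else 0

/-- Threefold Kronecker-product action of `A ⊗ B ⊗ C` on a three-qubit vector. -/
def act3 (A B C : Matrix (Fin 2) (Fin 2) ℂ) (ψ : Fin 2 × Fin 2 × Fin 2 → ℂ) :
    Fin 2 × Fin 2 × Fin 2 → ℂ :=
  fun p => ∑ l : Fin 2, ∑ m : Fin 2, ∑ n : Fin 2,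
    A p.1 l * B p.2.1 m * C p.2.2 n * ψ (l, m, n)

abbrev M2 := Matrix (Fin 2) (Fin 2) ℂ

lemma key (G H B C : M2) (ψ : Fin 2 × Fin 2 × Fin 2 → ℂ) (M0 M1 : M2)
    (hM0 : ∀ a b, M0 a b = ψ (0, a, b)) (hM1 : ∀ a b, M1 a b = ψ (1, a, b))
    (i j k : Fin 2) :
    act3 (G * H) B C ψ (i, j, k) =
      ∑ m : Fin 2, G i m * (B * (H m 0 • M0 + H m 1 • M1) * Cᵀ) j k := by
  simp [act3, Matrix.mul_apply, Matrix.add_apply, Matrix.smul_apply, Matrix.transpose_apply,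
    Fin.sum_univ_two, smul_eq_mul, hM0, hM1]
  ring

lemma rank_one (M : M2) (hM : M ≠ 0) (hd : M.det = 0) :
    ∃ x y : Fin 2 → ℂ, x ≠ 0 ∧ y ≠ 0 ∧ ∀ j k, M j k = x j * y k := by
  have hdet : M 0 0 * M 1 1 = M 0 1 * M 1 0 := by
    rw [Matrix.det_fin_two] at hd; linear_combination hd
  have hex : ∃ j k, M j k ≠ 0 := by
    by_contra h; push_neg at h; apply hM; ext j k; simpa using h j k
  obtain ⟨j₀, k₀, h0⟩ := hex
  refine ⟨fun j => M j k₀, fun k => M j₀ k / M j₀ k₀, ?_, ?_, ?_⟩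
  · intro h
    exact h0 (by simpa using congrFun h j₀)
  · intro h
    have := congrFun h k₀
    rw [div_self h0] at this
    simpa using this
  · intro j k
    fin_cases j₀ <;> fin_cases k₀ <;>
      simp only [Fin.zero_eta, Fin.mk_one, Fin.isValue] at h0 <;>
      fin_cases j <;> fin_cases k <;>
      simp only [Fin.zero_eta, Fin.mk_one, Fin.isValue] <;>
      field_simp <;>
      first
        | rfl
        | linear_combination hdet
        | linear_combination -hdet
        | ring

set_option maxHeartbeats 2000000 in
theorem ghz_w_trichotomy (ψ : Fin 2 × Fin 2 × Fin 2 → ℂ) (hψ : ψ ≠ 0)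
    (h1 : ¬ ∃ (α : Fin 2 → ℂ) (γ : Fin 2 × Fin 2 → ℂ),
      ∀ i j k : Fin 2, ψ (i, j, k) = α i * γ (j, k))
    (h2 : ¬ ∃ (α : Fin 2 → ℂ) (γ : Fin 2 × Fin 2 → ℂ),
      ∀ i j k : Fin 2, ψ (i, j, k) = α j * γ (i, k))
    (h3 : ¬ ∃ (α : Fin 2 → ℂ) (γ : Fin 2 × Fin 2 → ℂ),
      ∀ i j k : Fin 2, ψ (i, j, k) = α k * γ (i, j)) :
    ∃ A B C : Matrix (Fin 2) (Fin 2) ℂ, IsUnit A ∧ IsUnit B ∧ IsUnit C ∧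
      (act3 A B C ψ = e3 0 0 0 + e3 1 1 1 ∨
       act3 A B C ψ = e3 1 0 0 + e3 0 1 0 + e3 0 0 1) := by

  set M0 : M2 := Matrix.of fun a b => ψ (0, a, b) with hM0def
  set M1 : M2 := Matrix.of fun a b => ψ (1, a, b) with hM1def
  have hM0 : ∀ a b, M0 a b = ψ (0, a, b) := fun a b => rfl
  have hM1 : ∀ a b, M1 a b = ψ (1, a, b) := fun a b => rfl
  -- linear independence of M0, M1
  have hLI : ∀ s t : ℂ, s • M0 + t • M1 = 0 → s = 0 ∧ t = 0 := by
    intro s t h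
    have hent : ∀ a b, s * ψ (0, a, b) + t * ψ (1, a, b) = 0 := by
      intro a b
      have := congrFun (congrFun h a) b
      simpa [hM0def, hM1def] using this
    by_cases ht : t = 0
    · subst ht
      by_cases hs : s = 0
      · exact ⟨hs, rfl⟩
      · exfalso
        apply h1
        refine ⟨![0, 1], fun p => ψ (1, p.1, p.2), fun i j k => ?_⟩
        fin_cases i
        · have := hent j k
          simp only [zero_mul, add_zero] at this
          have h0 : ψ (0, j, k) = 0 := (mul_eq_zero.mp this).resolve_left hs
          simp [h0]
        · simp
    · exfalso
      apply h1
      refine ⟨![1, -(s / t)], fun p => ψ (0, p.1, p.2), fun i j k => ?_⟩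
      fin_cases i
      · simp
      · have := hent j k
        simp only [Fin.mk_one, Fin.isValue, Matrix.cons_val_one, Matrix.cons_val_zero, Matrix.head_cons]
        field_simp
        linear_combination this
  have hM0ne : M0 ≠ 0 := by
    intro h
    have := (hLI 1 0 (by simp [h])).1
    exact one_ne_zero this
  have hM1ne : M1 ≠ 0 := by
    intro h
    have := (hLI 0 1 (by simp [h])).2
    exact one_ne_zero this
  by_cases hsing : M0.det = 0 ∧ M1.det = 0 ∧ (M0 + M1).det = 0
  · exfalso
    obtain ⟨hd0, hd1, hd01⟩ := hsing
    obtain ⟨x, y, hx, hy, hxy⟩ := rank_one M0 hM0ne hd0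
    obtain ⟨u, v, hu, hv, huv⟩ := rank_one M1 hM1ne hd1
    have hfac : (x 0 * u 1 - x 1 * u 0) * (y 0 * v 1 - y 1 * v 0) = 0 := by
      rw [Matrix.det_fin_two] at hd01
      simp only [Matrix.add_apply, hxy, huv] at hd01
      linear_combination hd01
    rcases mul_eq_zero.mp hfac with hcx | hcy
    · -- common left (column) direction: contradicts h2
      apply h2
      have hx' : x 0 ≠ 0 ∨ x 1 ≠ 0 := by
        by_contra hc
        push_neg at hc
        exact hx (by funext j; fin_cases j <;> simp [hc.1, hc.2])
      rcases hx' with hx0 | hx1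
      · refine ⟨fun j => x j / x 0,
          fun p => ![x 0 * y p.2, u 0 * v p.2] p.1, fun i j k => ?_⟩
        have e0 : ψ (0, j, k) = x j * y k := hxy j k
        have e1 : ψ (1, j, k) = u j * v k := huv j k
        fin_cases i <;>
          simp only [Fin.zero_eta, Fin.mk_one, Fin.isValue, Matrix.cons_val_zero,
            Matrix.cons_val_one, Matrix.head_cons, e0, e1]
        · field_simp
        · fin_cases j <;> simp only [Fin.zero_eta, Fin.mk_one, Fin.isValue] <;> field_simp <;>
            first | ring1 | linear_combination v k * hcx | linear_combination -(v k) * hcx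
      · refine ⟨fun j => x j / x 1,
          fun p => ![x 1 * y p.2, u 1 * v p.2] p.1, fun i j k => ?_⟩
        have e0 : ψ (0, j, k) = x j * y k := hxy j k
        have e1 : ψ (1, j, k) = u j * v k := huv j k
        fin_cases i <;>
          simp only [Fin.zero_eta, Fin.mk_one, Fin.isValue, Matrix.cons_val_zero,
            Matrix.cons_val_one, Matrix.head_cons, e0, e1]
        · field_simp
        · fin_cases j <;> simp only [Fin.zero_eta, Fin.mk_one, Fin.isValue] <;> field_simp <;>
            first | ring1 | linear_combination v k * hcx | linear_combination -(v k) * hcx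
    · -- common right (row) direction: contradicts h3
      apply h3
      have hy' : y 0 ≠ 0 ∨ y 1 ≠ 0 := by
        by_contra hc
        push_neg at hc
        exact hy (by funext j; fin_cases j <;> simp [hc.1, hc.2])
      rcases hy' with hy0 | hy1
      · refine ⟨fun k => y k / y 0,
          fun p => ![x p.2 * y 0, u p.2 * v 0] p.1, fun i j k => ?_⟩
        have e0 : ψ (0, j, k) = x j * y k := hxy j k
        have e1 : ψ (1, j, k) = u j * v k := huv j k
        fin_cases i <;>
          simp only [Fin.zero_eta, Fin.mk_one, Fin.isValue, Matrix.cons_val_zero,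
            Matrix.cons_val_one, Matrix.head_cons, e0, e1]
        · field_simp
        · fin_cases k <;> simp only [Fin.zero_eta, Fin.mk_one, Fin.isValue] <;> field_simp <;>
            first | ring1 | linear_combination u j * hcy | linear_combination -(u j) * hcy
      · refine ⟨fun k => y k / y 1,
          fun p => ![x p.2 * y 1, u p.2 * v 1] p.1, fun i j k => ?_⟩
        have e0 : ψ (0, j, k) = x j * y k := hxy j k
        have e1 : ψ (1, j, k) = u j * v k := huv j k
        fin_cases i <;>
          simp only [Fin.zero_eta, Fin.mk_one, Fin.isValue, Matrix.cons_val_zero,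
            Matrix.cons_val_one, Matrix.head_cons, e0, e1]
        · field_simp
        · fin_cases k <;> simp only [Fin.zero_eta, Fin.mk_one, Fin.isValue] <;> field_simp <;>
            first | ring1 | linear_combination u j * hcy | linear_combination -(u j) * hcy
  · -- pencil contains an invertible element
    have hH : ∃ H : M2, H.det ≠ 0 ∧ (H 1 0 • M0 + H 1 1 • M1).det ≠ 0 := by
      by_cases d1 : M1.det = 0
      · by_cases d0 : M0.det = 0
        · have h01 : (M0 + M1).det ≠ 0 := by tauto
          refine ⟨!![1, 0; 1, 1], by norm_num [Matrix.det_fin_two_of], ?_⟩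
          have e : (!![(1 : ℂ), 0; 1, 1] : M2) 1 0 • M0 + (!![(1 : ℂ), 0; 1, 1] : M2) 1 1 • M1
              = M0 + M1 := by norm_num
          rw [e]; exact h01
        · refine ⟨!![0, 1; 1, 0], by norm_num [Matrix.det_fin_two_of], ?_⟩
          have e : (!![(0 : ℂ), 1; 1, 0] : M2) 1 0 • M0 + (!![(0 : ℂ), 1; 1, 0] : M2) 1 1 • M1
              = M0 := by norm_num
          rw [e]; exact d0
      · refine ⟨1, by norm_num, ?_⟩
        have e : ((1 : M2)) 1 0 • M0 + ((1 : M2)) 1 1 • M1 = M1 := by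
          norm_num [Matrix.one_apply]
        rw [e]; exact d1
    obtain ⟨H, hHdet, hNdet⟩ := hH
    haveI : Invertible (H 1 0 • M0 + H 1 1 • M1) := (H 1 0 • M0 + H 1 1 • M1).invertibleOfIsUnitDet (isUnit_iff_ne_zero.2 hNdet)
    have hTns : ∀ r : ℂ, (H 0 0 • M0 + H 0 1 • M1) * (H 1 0 • M0 + H 1 1 • M1)⁻¹ ≠ r • 1 := by
      intro r hr
      have hQ : (H 0 0 • M0 + H 0 1 • M1) = r • (H 1 0 • M0 + H 1 1 • M1) := by
        calc (H 0 0 • M0 + H 0 1 • M1) = (H 0 0 • M0 + H 0 1 • M1) * (H 1 0 • M0 + H 1 1 • M1)⁻¹ * (H 1 0 • M0 + H 1 1 • M1) :=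
              (Matrix.inv_mul_cancel_right_of_invertible _ _).symm
        _ = (r • 1) * (H 1 0 • M0 + H 1 1 • M1) := by rw [hr]
        _ = r • (H 1 0 • M0 + H 1 1 • M1) := by rw [Matrix.smul_mul, Matrix.one_mul]
      have hz : (H 0 0 - r * H 1 0) • M0 + (H 0 1 - r * H 1 1) • M1 = 0 := by
        have e : (H 0 0 - r * H 1 0) • M0 + (H 0 1 - r * H 1 1) • M1
            = (H 0 0 • M0 + H 0 1 • M1) - r • (H 1 0 • M0 + H 1 1 • M1) := by module
        rw [e, sub_eq_zero]
        exact hQ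
      obtain ⟨e1, e2⟩ := hLI _ _ hz
      apply hHdet
      rw [Matrix.det_fin_two]
      have e1' : H 0 0 = r * H 1 0 := by linear_combination e1
      have e2' : H 0 1 = r * H 1 1 := by linear_combination e2
      rw [e1', e2']; ring
    obtain ⟨T, hT⟩ : ∃ T : M2, T = (H 0 0 • M0 + H 0 1 • M1) * (H 1 0 • M0 + H 1 1 • M1)⁻¹ := ⟨_, rfl⟩
    have hTP0 : T * (H 1 0 • M0 + H 1 1 • M1) = (H 0 0 • M0 + H 0 1 • M1) := by
      rw [hT]; exact Matrix.inv_mul_cancel_right_of_invertible _ _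
    obtain ⟨sq, hsq⟩ := IsAlgClosed.exists_pow_nat_eq
      ((T 0 0 + T 1 1) ^ 2 - 4 * (T 0 0 * T 1 1 - T 0 1 * T 1 0)) (n := 2) (by norm_num)
    obtain ⟨ev, hev⟩ : ∃ ev : ℂ, ev = (T 0 0 + T 1 1 + sq) / 2 := ⟨_, rfl⟩
    obtain ⟨S, hS⟩ : ∃ S : M2, S = T - ev • 1 := ⟨_, rfl⟩
    have hSdet : S.det = 0 := by
      rw [hS, Matrix.det_fin_two]
      simp only [Matrix.sub_apply, Matrix.smul_apply, Matrix.one_apply, smul_eq_mul]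
      norm_num
      subst hev
      field_simp
      linear_combination hsq
    have hSne : S ≠ 0 := by
      intro h
      apply hTns ev
      rw [← hT]
      have h0 : T - ev • 1 = 0 := by rw [← hS]; exact h
      exact sub_eq_zero.mp h0
    obtain ⟨x, y, hx, hy, hxy⟩ := rank_one S hSne hSdet
    obtain ⟨μ, hμdef⟩ : ∃ μ : ℂ, μ = x 0 * y 0 + x 1 * y 1 := ⟨_, rfl⟩
    rcases eq_or_ne μ 0 with hμ | hμ
    · -- W case
      have hxy0 : x 0 * y 0 + x 1 * y 1 = 0 := by rw [← hμdef, hμ]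
      have hxne : x 0 ≠ 0 ∨ x 1 ≠ 0 := by
        by_contra hc
        push_neg at hc
        exact hx (by funext j; fin_cases j <;> simp [hc.1, hc.2])
      have hyne : y 0 ≠ 0 ∨ y 1 ≠ 0 := by
        by_contra hc
        push_neg at hc
        exact hy (by funext j; fin_cases j <;> simp [hc.1, hc.2])
      obtain ⟨w0, w1, hw1, hwdet⟩ :
          ∃ w0 w1 : ℂ, y 0 * w0 + y 1 * w1 = 1 ∧ x 0 * w1 - x 1 * w0 ≠ 0 := by
        by_cases hy0 : y 0 = 0
        · have hy1 : y 1 ≠ 0 := hyne.resolve_left (not_not.2 hy0)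
          have hx1 : x 1 = 0 := by
            have hz : x 1 * y 1 = 0 := by linear_combination hxy0 - x 0 * hy0
            exact (mul_eq_zero.mp hz).resolve_right hy1
          have hx0 : x 0 ≠ 0 := hxne.resolve_right (fun h => h hx1)
          refine ⟨0, 1 / y 1, by field_simp; ring, ?_⟩
          simpa using mul_ne_zero hx0 (one_div_ne_zero hy1)
        · have hx1 : x 1 ≠ 0 := by
            intro h1
            have hz : x 0 * y 0 = 0 := by linear_combination hxy0 - y 1 * h1
            rcases mul_eq_zero.mp hz with h0 | h0
            · exact hx (by funext j; fin_cases j <;> simp [h0, h1])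
            · exact hy0 h0
          refine ⟨1 / y 0, 0, by field_simp; ring, ?_⟩
          simp only [mul_zero, zero_sub, neg_ne_zero]
          exact mul_ne_zero hx1 (one_div_ne_zero hy0)
      obtain ⟨P, hP⟩ : ∃ P : M2, P = !![x 0, w0; x 1, w1] := ⟨_, rfl⟩
      have hPdet : P.det ≠ 0 := by
        rw [hP, Matrix.det_fin_two_of]
        intro h; apply hwdet; linear_combination h
      haveI : Invertible P := P.invertibleOfIsUnitDet (isUnit_iff_ne_zero.2 hPdet)
      have hSP : S * P = P * !![0, 1; 0, 0] := by
        rw [hP]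
        ext a b
        fin_cases a <;> fin_cases b <;>
          simp only [Matrix.mul_apply, Fin.sum_univ_two, hxy, Fin.zero_eta, Fin.mk_one,
            Fin.isValue, Matrix.cons_val', Matrix.cons_val_zero, Matrix.cons_val_one,
            Matrix.head_cons, Matrix.head_fin_const, Matrix.empty_val', Matrix.cons_val_fin_one,
            Matrix.of_apply] <;>
          first
            | ring1
            | linear_combination x 0 * hxy0
            | linear_combination x 1 * hxy0
            | linear_combination x 0 * hw1
            | linear_combination x 1 * hw1
      have hTS : T = ev • 1 + S := by rw [hS]; abel
      have hTP : T * P = P * (ev • 1 + !![0, 1; 0, 0]) := by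
        rw [hTS, Matrix.add_mul, Matrix.smul_mul, Matrix.one_mul, Matrix.mul_add,
          Matrix.mul_smul, Matrix.mul_one, hSP]
      have E0 : P⁻¹ * (H 0 0 • M0 + H 0 1 • M1) * ((H 1 0 • M0 + H 1 1 • M1)⁻¹ * P) = ev • 1 + !![0, 1; 0, 0] := by
        have h1 : (H 0 0 • M0 + H 0 1 • M1) * ((H 1 0 • M0 + H 1 1 • M1)⁻¹ * P) = T * P := by rw [hT, Matrix.mul_assoc]
        calc P⁻¹ * (H 0 0 • M0 + H 0 1 • M1) * ((H 1 0 • M0 + H 1 1 • M1)⁻¹ * P) = P⁻¹ * ((H 0 0 • M0 + H 0 1 • M1) * ((H 1 0 • M0 + H 1 1 • M1)⁻¹ * P)) := by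
              rw [Matrix.mul_assoc]
        _ = P⁻¹ * (P * (ev • 1 + !![0, 1; 0, 0])) := by rw [h1, hTP]
        _ = _ := by rw [Matrix.inv_mul_cancel_left_of_invertible]
      have E1 : P⁻¹ * (H 1 0 • M0 + H 1 1 • M1) * ((H 1 0 • M0 + H 1 1 • M1)⁻¹ * P) = 1 := by
        rw [Matrix.mul_assoc, Matrix.mul_inv_cancel_left_of_invertible,
          Matrix.inv_mul_of_invertible]
      have E0' : P⁻¹ * (H 0 0 • M0 + H 0 1 • M1) * ((H 1 0 • M0 + H 1 1 • M1)⁻¹ * P * !![0, 1; 1, 0]) =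
          (ev • 1 + !![0, 1; 0, 0]) * !![0, 1; 1, 0] := by
        rw [← Matrix.mul_assoc, E0]
      have E1' : P⁻¹ * (H 1 0 • M0 + H 1 1 • M1) * ((H 1 0 • M0 + H 1 1 • M1)⁻¹ * P * !![0, 1; 1, 0]) = 1 * !![0, 1; 1, 0] := by
        rw [← Matrix.mul_assoc, E1]
      refine ⟨!![0, 1; 1, -ev] * H, P⁻¹, ((H 1 0 • M0 + H 1 1 • M1)⁻¹ * P * !![0, 1; 1, 0])ᵀ, ?_, ?_, ?_, Or.inr ?_⟩
      · rw [Matrix.isUnit_iff_isUnit_det, Matrix.det_mul, Matrix.det_fin_two_of]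
        refine isUnit_iff_ne_zero.2 (mul_ne_zero ?_ hHdet)
        norm_num
      · rw [Matrix.isUnit_nonsing_inv_iff, Matrix.isUnit_iff_isUnit_det]
        exact isUnit_iff_ne_zero.2 hPdet
      · rw [Matrix.isUnit_iff_isUnit_det, Matrix.det_transpose, Matrix.det_mul, Matrix.det_mul,
          Matrix.det_fin_two_of]
        refine isUnit_iff_ne_zero.2 (mul_ne_zero (mul_ne_zero ?_ hPdet) (by norm_num))
        rw [Matrix.det_nonsing_inv]
        simp only [Ring.inverse_eq_inv']
        exact inv_ne_zero hNdet
      · funext p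
        obtain ⟨i, j, k⟩ := p
        rw [key !![0, 1; 1, -ev] H P⁻¹ (((H 1 0 • M0 + H 1 1 • M1)⁻¹ * P * !![0, 1; 1, 0])ᵀ) ψ M0 M1 hM0 hM1 i j k]
        simp only [Fin.sum_univ_two, Matrix.transpose_transpose]
        rw [E0', E1']
        rw [show (ev • (1 : M2) + !![0, 1; 0, 0]) * !![0, 1; 1, 0] = !![1, ev; ev, 0] from by
          rw [Matrix.one_fin_two]; ext a b; fin_cases a <;> fin_cases b <;>
            simp [Matrix.mul_apply, Fin.sum_univ_two], Matrix.one_mul]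
        fin_cases i <;> fin_cases j <;> fin_cases k <;>
          simp [e3, Prod.ext_iff] <;> ring1
    · -- GHZ case
      obtain ⟨P, hP⟩ : ∃ P : M2, P = !![x 0, y 1; x 1, -(y 0)] := ⟨_, rfl⟩
      have hPdet : P.det ≠ 0 := by
        have e : P.det = -μ := by rw [hP, Matrix.det_fin_two_of, hμdef]; ring
        rw [e]
        exact neg_ne_zero.2 hμ
      haveI : Invertible P := P.invertibleOfIsUnitDet (isUnit_iff_ne_zero.2 hPdet)
      have hSP : S * P = P * !![μ, 0; 0, 0] := by
        rw [hP]
        ext a b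
        fin_cases a <;> fin_cases b <;>
          simp only [Matrix.mul_apply, Fin.sum_univ_two, hxy, Fin.zero_eta, Fin.mk_one,
            Fin.isValue, Matrix.cons_val', Matrix.cons_val_zero, Matrix.cons_val_one,
            Matrix.head_cons, Matrix.head_fin_const, Matrix.empty_val', Matrix.cons_val_fin_one,
            Matrix.of_apply] <;>
          first
            | ring1
            | linear_combination x 0 * hμdef
            | linear_combination x 1 * hμdef
            | linear_combination (-(x 0)) * hμdef
            | linear_combination (-(x 1)) * hμdef
      have hTS : T = ev • 1 + S := by rw [hS]; abel
      have hTP : T * P = P * (ev • 1 + !![μ, 0; 0, 0]) := by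
        rw [hTS, Matrix.add_mul, Matrix.smul_mul, Matrix.one_mul, Matrix.mul_add,
          Matrix.mul_smul, Matrix.mul_one, hSP]
      have E0 : P⁻¹ * (H 0 0 • M0 + H 0 1 • M1) * ((H 1 0 • M0 + H 1 1 • M1)⁻¹ * P) = ev • 1 + !![μ, 0; 0, 0] := by
        have h1 : (H 0 0 • M0 + H 0 1 • M1) * ((H 1 0 • M0 + H 1 1 • M1)⁻¹ * P) = T * P := by rw [hT, Matrix.mul_assoc]
        calc P⁻¹ * (H 0 0 • M0 + H 0 1 • M1) * ((H 1 0 • M0 + H 1 1 • M1)⁻¹ * P) = P⁻¹ * ((H 0 0 • M0 + H 0 1 • M1) * ((H 1 0 • M0 + H 1 1 • M1)⁻¹ * P)) := by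
              rw [Matrix.mul_assoc]
        _ = P⁻¹ * (P * (ev • 1 + !![μ, 0; 0, 0])) := by rw [h1, hTP]
        _ = _ := by rw [Matrix.inv_mul_cancel_left_of_invertible]
      have E1 : P⁻¹ * (H 1 0 • M0 + H 1 1 • M1) * ((H 1 0 • M0 + H 1 1 • M1)⁻¹ * P) = 1 := by
        rw [Matrix.mul_assoc, Matrix.mul_inv_cancel_left_of_invertible,
          Matrix.inv_mul_of_invertible]
      refine ⟨!![1 / μ, -(ev / μ); -(1 / μ), (ev + μ) / μ] * H, P⁻¹, ((H 1 0 • M0 + H 1 1 • M1)⁻¹ * P)ᵀ,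
        ?_, ?_, ?_, Or.inl ?_⟩
      · rw [Matrix.isUnit_iff_isUnit_det, Matrix.det_mul, Matrix.det_fin_two_of]
        refine isUnit_iff_ne_zero.2 (mul_ne_zero ?_ hHdet)
        have e : 1 / μ * ((ev + μ) / μ) - -(ev / μ) * -(1 / μ) = 1 / μ := by
          field_simp
          ring
        rw [e]
        exact one_div_ne_zero hμ
      · rw [Matrix.isUnit_nonsing_inv_iff, Matrix.isUnit_iff_isUnit_det]
        exact isUnit_iff_ne_zero.2 hPdet
      · rw [Matrix.isUnit_iff_isUnit_det, Matrix.det_transpose, Matrix.det_mul]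
        refine isUnit_iff_ne_zero.2 (mul_ne_zero ?_ hPdet)
        rw [Matrix.det_nonsing_inv]
        simp only [Ring.inverse_eq_inv']
        exact inv_ne_zero hNdet
      · funext p
        obtain ⟨i, j, k⟩ := p
        rw [key !![1 / μ, -(ev / μ); -(1 / μ), (ev + μ) / μ] H P⁻¹ (((H 1 0 • M0 + H 1 1 • M1)⁻¹ * P)ᵀ)
          ψ M0 M1 hM0 hM1 i j k]
        simp only [Fin.sum_univ_two, Matrix.transpose_transpose]
        rw [E0, E1]
        rw [show (ev • (1 : M2) + !![μ, 0; 0, 0]) = !![ev + μ, 0; 0, ev] from by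
          rw [Matrix.one_fin_two]; ext a b; fin_cases a <;> fin_cases b <;> simp, Matrix.one_fin_two]
        fin_cases i <;> fin_cases j <;> fin_cases k <;>
          simp [e3, Prod.ext_iff] <;> field_simp <;> ring1
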